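/- Let {ρ_j}_{j∈S} and {σ_j}_{j∈S} be finite families of positive semidefinite n×n complex matrices, and let ρ = blockDiagonal(ρ_j) and σ = blockDiagonal(σ_j) be the corresponding block-diagonal matrices (with blocks indexed by j ∈ S). Then √F(ρ, σ) = Σ_{j∈S} √F(ρ_j, σ_j); that is, ‖√ρ √σ‖₁ = Σ_{j∈S} ‖√ρ_j √σ_j‖₁. -/

import Mathlib

open scoped Kronecker ComplexOrder
open Matrix

/-- The positive semidefinite square root of a positive semidefinite matrix
(junk value `0` on matrices that are not positive semidefinite). -/
noncomputable def psdSqrt {n : Type*} [Fintype n] [DecidableEq n] (A : Matrix n n ℂ) :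
    Matrix n n ℂ :=
  letI := Classical.propDecidable A.PosSemidef
  if h : A.PosSemidef then
    (h.1.eigenvectorUnitary : Matrix n n ℂ) * diagonal ((↑) ∘ (Real.sqrt ∘ h.1.eigenvalues)) *
      (star h.1.eigenvectorUnitary : Matrix n n ℂ)
  else 0

/-- The trace norm `‖A‖₁ = tr √(A Aᴴ)`. -/
noncomputable def traceNorm {n : Type*} [Fintype n] [DecidableEq n] (A : Matrix n n ℂ) : ℝ :=
  (psdSqrt (A * Aᴴ)).trace.re

/-- The fidelity `F(A,B) = ‖√A √B‖₁²` between positive semidefinite matrices. -/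
noncomputable def fidelity {n : Type*} [Fintype n] [DecidableEq n] (A B : Matrix n n ℂ) : ℝ :=
  traceNorm (psdSqrt A * psdSqrt B) ^ 2

/-- The Choi matrix `J(Φ) = (1/n) Σ_{j,k} E_{jk} ⊗ Φ(E_{jk})` of a map on matrices. -/
noncomputable def choi {n m : Type*} [Fintype n] [DecidableEq n] [Fintype m]
    (Φ : Matrix n n ℂ → Matrix m m ℂ) : Matrix (n × m) (n × m) ℂ :=
  (Fintype.card n : ℂ)⁻¹ • ∑ j : n, ∑ k : n,
    (Matrix.single j k (1 : ℂ)) ⊗ₖ Φ (Matrix.single j k (1 : ℂ))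

/-- The extension `(id_F ⊗ Φ)` of a map on matrices by an ancilla of dimension `F`. -/
def tensorExt (F : ℕ) {n m : Type*} (Φ : Matrix n n ℂ → Matrix m m ℂ)
    (ρ : Matrix (Fin F × n) (Fin F × n) ℂ) : Matrix (Fin F × m) (Fin F × m) ℂ :=
  Matrix.of fun p q => Φ (Matrix.of fun i j => ρ (p.1, i) (q.1, j)) p.2 q.2

/-- The diamond norm `‖Φ‖◇`: the supremum of `‖(id_F ⊗ Φ)(ρ)‖₁` over all finite ancilla
dimensions `F` and density matrices `ρ`. -/
noncomputable def diamondNorm {n m : Type*} [Fintype n] [DecidableEq n] [Fintype m]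
    [DecidableEq m] (Φ : Matrix n n ℂ → Matrix m m ℂ) : ℝ :=
  sSup { x : ℝ | ∃ (F : ℕ) (ρ : Matrix (Fin F × n) (Fin F × n) ℂ),
    ρ.PosSemidef ∧ ρ.trace = 1 ∧ x = traceNorm (tensorExt F Φ ρ) }

/-!
The positive semidefinite square root is unique, so it is taken blockwise on block-diagonal
matrices. Hence `√ρ √σ` is block-diagonal with blocks `√ρ_j √σ_j`, as is `√(A Aᴴ)` for any
block-diagonal `A`, and the trace of a block-diagonal matrix is the sum of the traces of its blocks.
-/

open scoped MatrixOrder in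
theorem Matrix.posSemidef_blockDiagonal {𝕜 m S : Type*} [RCLike 𝕜] [Fintype m] [DecidableEq m]
    [Fintype S] [DecidableEq S] {A : S → Matrix m m 𝕜} (hA : ∀ j, (A j).PosSemidef) :
    (blockDiagonal A).PosSemidef := by
  choose B hB using fun j => CStarAlgebra.nonneg_iff_eq_star_mul_self.mp (hA j).nonneg
  have hA_eq : blockDiagonal A = (blockDiagonal B)ᴴ * blockDiagonal B := by
    rw [blockDiagonal_conjTranspose, ← blockDiagonal_mul]; exact congrArg _ (funext hB)
  rw [hA_eq]
  exact posSemidef_conjTranspose_mul_self _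

lemma Matrix.PosSemidef.re_trace_nonneg {n : Type*} [Fintype n] {A : Matrix n n ℂ}
    (hA : A.PosSemidef) : 0 ≤ A.trace.re :=
  (Complex.nonneg_iff.mp hA.trace_nonneg).1

section psdSqrt

variable {n S : Type*} [Fintype n] [DecidableEq n] [Fintype S] [DecidableEq S]

open scoped MatrixOrder

lemma psdSqrt_eq_cfcSqrt {A : Matrix n n ℂ} (hA : A.PosSemidef) : psdSqrt A = CFC.sqrt A := by
  rw [CFC.sqrt_eq_real_sqrt A hA.nonneg, cfcₙ_eq_cfc (hf0 := Real.sqrt_zero), hA.1.cfc_eq,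
    psdSqrt, dif_pos hA]
  rfl

lemma posSemidef_psdSqrt {A : Matrix n n ℂ} (hA : A.PosSemidef) : (psdSqrt A).PosSemidef := by
  rw [psdSqrt_eq_cfcSqrt hA]
  exact (CFC.sqrt_nonneg A).posSemidef

lemma psdSqrt_mul_self {A : Matrix n n ℂ} (hA : A.PosSemidef) : psdSqrt A * psdSqrt A = A := by
  rw [psdSqrt_eq_cfcSqrt hA]
  exact CFC.sqrt_mul_sqrt_self A hA.nonneg

lemma psdSqrt_eq_of_mul_self {A B : Matrix n n ℂ} (hB : B.PosSemidef) (h : B * B = A) :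
    psdSqrt A = B := by
  have hA : A.PosSemidef := by
    simpa only [← h, hB.1.eq] using posSemidef_conjTranspose_mul_self B
  rw [psdSqrt_eq_cfcSqrt hA]
  exact CFC.sqrt_unique h hB.nonneg

lemma psdSqrt_blockDiagonal {A : S → Matrix n n ℂ} (hA : ∀ j, (A j).PosSemidef) :
    psdSqrt (blockDiagonal A) = blockDiagonal fun j => psdSqrt (A j) := by
  refine psdSqrt_eq_of_mul_self (posSemidef_blockDiagonal fun j => posSemidef_psdSqrt (hA j)) ?_
  rw [← blockDiagonal_mul]
  exact congrArg _ (funext fun j => psdSqrt_mul_self (hA j))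

lemma traceNorm_nonneg (A : Matrix n n ℂ) : 0 ≤ traceNorm A :=
  (posSemidef_psdSqrt (posSemidef_self_mul_conjTranspose A)).re_trace_nonneg

lemma traceNorm_blockDiagonal (A : S → Matrix n n ℂ) :
    traceNorm (blockDiagonal A) = ∑ j, traceNorm (A j) := by
  rw [traceNorm, blockDiagonal_conjTranspose, ← blockDiagonal_mul,
    psdSqrt_blockDiagonal fun j => posSemidef_self_mul_conjTranspose (A j), trace_blockDiagonal,
    Complex.re_sum]
  rfl

lemma sqrt_fidelity_eq_traceNorm (A B : Matrix n n ℂ) :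
    √(fidelity A B) = traceNorm (psdSqrt A * psdSqrt B) :=
  Real.sqrt_sq (traceNorm_nonneg _)

end psdSqrt

/-- For block-diagonal positive semidefinite matrices,
`√F(ρ, σ) = Σ_j √F(ρ_j, σ_j)`, i.e. `‖√ρ √σ‖₁ = Σ_j ‖√ρ_j √σ_j‖₁`. -/
theorem sqrt_fidelity_blockDiagonal {n S : Type*} [Fintype n] [DecidableEq n]
    [Fintype S] [DecidableEq S]
    (ρ σ : S → Matrix n n ℂ) (hρ : ∀ j, (ρ j).PosSemidef) (hσ : ∀ j, (σ j).PosSemidef) :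
    Real.sqrt (fidelity (Matrix.blockDiagonal ρ) (Matrix.blockDiagonal σ))
        = ∑ j, Real.sqrt (fidelity (ρ j) (σ j))
      ∧ traceNorm (psdSqrt (Matrix.blockDiagonal ρ) * psdSqrt (Matrix.blockDiagonal σ))
        = ∑ j, traceNorm (psdSqrt (ρ j) * psdSqrt (σ j)) := by
  have h_traceNorm : traceNorm (psdSqrt (blockDiagonal ρ) * psdSqrt (blockDiagonal σ))
      = ∑ j, traceNorm (psdSqrt (ρ j) * psdSqrt (σ j)) := by
    rw [psdSqrt_blockDiagonal hρ, psdSqrt_blockDiagonal hσ, ← blockDiagonal_mul,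
      traceNorm_blockDiagonal]
  simp only [sqrt_fidelity_eq_traceNorm]
  exact ⟨h_traceNorm, h_traceNorm⟩
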